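/- Two embeddings ρ₁, ρ₂ : V → ℝ² of a finite connected graph G that assign the same tuple (edge lengths and oriented angles at each middle vertex) to every two-hop path, and that are edge-length-preservingly related (dist(ρ₁(u), ρ₁(v)) = dist(ρ₂(u), ρ₂(v)) for each edge uv), differ by an orientation-preserving rigid motion, provided G contains at least one two-hop path and every vertex is reachable by chaining two-hop extensions from that path's first edge. -/

import Mathlib

/-- Vertices reachable by chaining two-hop extensions from a base edge `{u, w}`. -/
inductive TwoHopReach {V : Type*} (G : SimpleGraph V) (u w : V) : V → Prop
  | base_u : TwoHopReach G u w u
  | base_w : TwoHopReach G u w w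
  | extend (vi vj vk : V) : TwoHopReach G u w vi → TwoHopReach G u w vj →
      G.Adj vi vj → G.Adj vj vk → TwoHopReach G u w vk

/-!
Identify the plane with `ℂ`. Matching the base edge `{u, w}` fixes a rotation `R` and a translation
`t`. A two-hop tuple determines the complex ratio `(ρ vk - ρ vj) / (ρ vi - ρ vj)` (its modulus is
the ratio of the two edge lengths, its argument the oriented angle), so once `ρ₂ = R * ρ₁ + t`
holds at `vi` and `vj` it is forced at `vk`; induction on two-hop reachability finishes.
-/

namespace Complex

theorem div_sub_eq_div_sub_of_dist_eq_of_arg_eq {a b c a' b' c' : ℂ}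
    (hab : dist a b = dist a' b') (hbc : dist b c = dist b' c')
    (harg : arg ((c - b) / (a - b)) = arg ((c' - b') / (a' - b'))) :
    (c - b) / (a - b) = (c' - b') / (a' - b') := by
  refine ext_norm_arg ?_ harg
  simp only [norm_div, ← dist_eq, dist_comm c, dist_comm c', hab, hbc]

theorem exists_rigid_motion_of_dist_eq {a b a' b' : ℂ} (hab : a ≠ b)
    (hdist : dist a b = dist a' b') :
    ∃ R t : ℂ, ‖R‖ = 1 ∧ a' = R * a + t ∧ b' = R * b + t := by
  have hab' : b - a ≠ 0 := sub_ne_zero.mpr hab.symm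
  refine ⟨(b' - a') / (b - a), a' - (b' - a') / (b - a) * a, ?_, by ring, ?_⟩
  · rw [norm_div, ← dist_eq, ← dist_eq, dist_comm b, dist_comm b', hdist,
      div_self (hdist ▸ dist_ne_zero.mpr hab)]
  · linear_combination (div_mul_cancel₀ (b' - a') hab').symm

theorem eq_mul_add_of_div_sub_eq {R t a b c c' : ℂ} (hab : a ≠ b) (hR : R ≠ 0)
    (hratio : (c - b) / (a - b) = (c' - (R * b + t)) / (R * a + t - (R * b + t))) :
    c' = R * c + t := by
  have hab' : a - b ≠ 0 := sub_ne_zero.mpr hab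
  rw [show R * a + t - (R * b + t) = R * (a - b) by ring,
    eq_div_iff (mul_ne_zero hR hab')] at hratio
  have hc : (c - b) / (a - b) * (a - b) = c - b := div_mul_cancel₀ _ hab'
  linear_combination -hratio + R * hc

end Complex

theorem equal_tuples_implies_rigid_motion_general
    (V : Type*)
    (G : SimpleGraph V)
    (ρ₁ ρ₂ : V → ℂ)
    (hinj : ∀ x y : V, G.Adj x y → ρ₁ x ≠ ρ₁ y)
    (hlen : ∀ x y : V, G.Adj x y → dist (ρ₁ x) (ρ₁ y) = dist (ρ₂ x) (ρ₂ y))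
    (htuple : ∀ vi vj vk : V, G.Adj vi vj → G.Adj vj vk →
      dist (ρ₁ vi) (ρ₁ vj) = dist (ρ₂ vi) (ρ₂ vj) ∧
      dist (ρ₁ vj) (ρ₁ vk) = dist (ρ₂ vj) (ρ₂ vk) ∧
      Complex.arg ((ρ₁ vk - ρ₁ vj) / (ρ₁ vi - ρ₁ vj)) =
        Complex.arg ((ρ₂ vk - ρ₂ vj) / (ρ₂ vi - ρ₂ vj)))
    (u w : V) (huw : G.Adj u w)
    (hreach : ∀ v : V, TwoHopReach G u w v) :
    ∃ R t : ℂ, ‖R‖ = 1 ∧ ∀ v : V, ρ₂ v = R * ρ₁ v + t := by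
  obtain ⟨R, t, hR, hu, hw⟩ := Complex.exists_rigid_motion_of_dist_eq (hinj u w huw) (hlen u w huw)
  have hR₀ : R ≠ 0 := norm_ne_zero_iff.mp (hR ▸ one_ne_zero)
  refine ⟨R, t, hR, fun v => ?_⟩
  induction hreach v with
  | base_u => exact hu
  | base_w => exact hw
  | extend vi vj vk _ _ hij hjk ihi ihj =>
    obtain ⟨hdij, hdjk, harg⟩ := htuple vi vj vk hij hjk
    refine Complex.eq_mul_add_of_div_sub_eq (hinj vi vj hij) hR₀ ?_
    rw [← ihi, ← ihj]
    exact Complex.div_sub_eq_div_sub_of_dist_eq_of_arg_eq hdij hdjk harg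

/-- Two embeddings of a finite connected graph into the plane (modeled as `ℂ`) that
assign the same two-hop tuple (edge lengths and oriented angle at the middle vertex)
to every two-hop path and preserve edge lengths differ by an orientation-preserving
rigid motion `z ↦ R z + t` (`|R| = 1`), provided `G` contains a two-hop path
`(u, w, z)` and every vertex is reachable by chaining two-hop extensions from the
edge `{u, w}`. -/
theorem equal_tuples_implies_rigid_motion
    (V : Type*) [Fintype V]
    (G : SimpleGraph V) (hconn : G.Connected)
    (ρ₁ ρ₂ : V → ℂ)
    (hinj : ∀ x y : V, G.Adj x y → ρ₁ x ≠ ρ₁ y)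
    (hlen : ∀ x y : V, G.Adj x y → dist (ρ₁ x) (ρ₁ y) = dist (ρ₂ x) (ρ₂ y))
    (htuple : ∀ vi vj vk : V, G.Adj vi vj → G.Adj vj vk →
      dist (ρ₁ vi) (ρ₁ vj) = dist (ρ₂ vi) (ρ₂ vj) ∧
      dist (ρ₁ vj) (ρ₁ vk) = dist (ρ₂ vj) (ρ₂ vk) ∧
      Complex.arg ((ρ₁ vk - ρ₁ vj) / (ρ₁ vi - ρ₁ vj)) =
        Complex.arg ((ρ₂ vk - ρ₂ vj) / (ρ₂ vi - ρ₂ vj)))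
    (u w z : V) (huw : G.Adj u w) (hwz : G.Adj w z)
    (hreach : ∀ v : V, TwoHopReach G u w v) :
    ∃ R t : ℂ, ‖R‖ = 1 ∧ ∀ v : V, ρ₂ v = R * ρ₁ v + t :=
  equal_tuples_implies_rigid_motion_general V G ρ₁ ρ₂ hinj hlen htuple u w huw hreach
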